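/- Let z_1,…,z_r ∈ ℤ^d be generating vectors and n_1,…,n_r ≥ 1 integer moduli, with n = n_1⋯n_r, let A ⊂ ℤ^d be an anti-aliasing set with |A| = n, and let u : ℝ^d → ℂ be any function. Define the lattice-rule approximated Fourier coefficients û_a(h) = (1/n) · Σ_{k ∈ ℤ_{n_1}×⋯×ℤ_{n_r}} u(p_k) exp(−2πi h·p_k) for h ∈ A, and the trigonometric interpolant u_a(x) = Σ_{h ∈ A} û_a(h) exp(2πi h·x). Then u_a(p_k) = u(p_k) for every multi-index k ∈ ℤ_{n_1}×⋯×ℤ_{n_r}. -/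

import Mathlib

/-!
The map `h ↦ χ_h`, with `χ_h(g) = ∏ⱼ exp(2πi (h·z_j) g_j / n_j)`, sends `ℤ^d` to the characters
of `G = ℤ_{n_1} × ⋯ × ℤ_{n_r}`, and `χ_h = χ_{h'}` forces `h - h' ∈ Λ^⊥`. So on an anti-aliasing
set `A` it is injective, and `|A| = |G|` makes it a bijection onto the dual group. Since
`exp(2πi h·(p_k - p_{k'})) = χ_h(k - k')`, the interpolant at `p_k` is
`(1/n) Σ_{k'} u(p_{k'}) Σ_{ψ ∈ Ĝ} ψ(k - k')`, and orthogonality of characters leaves only `k' = k`.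
-/

noncomputable section

/-- Integer dot product on `ℤ^d`. -/
def dotZ {d : ℕ} (h z : Fin d → ℤ) : ℤ := ∑ i, h i * z i

/-- Membership in the dual lattice `Λ^⊥`. -/
def InDual {d r : ℕ} (z : Fin r → Fin d → ℤ) (n : Fin r → ℕ) (h : Fin d → ℤ) : Prop :=
  ∀ j, (n j : ℤ) ∣ dotZ h (z j)

/-- The lattice point `p_k = Σ_j (k_j/n_j) z_j ∈ ℝ^d`. -/
def latPt {d r : ℕ} (z : Fin r → Fin d → ℤ) (n : Fin r → ℕ)
    (k : (j : Fin r) → Fin (n j)) : Fin d → ℝ :=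
  fun i => ∑ j, ((k j : ℝ) / (n j : ℝ)) * (z j i : ℝ)

/-- The exponential `x ↦ exp(2πi h·x)`. -/
def eFun {d : ℕ} (h : Fin d → ℤ) (x : Fin d → ℝ) : ℂ :=
  Complex.exp (2 * Real.pi * Complex.I * ∑ i, (h i : ℂ) * (x i : ℂ))

open Finset

theorem AddChar.sum_apply_eq_ite_of_injOn {ι α : Type*} [AddCommGroup α] [Fintype α]
    [DecidableEq α] {χ : ι → AddChar α ℂ} {A : Finset ι} (hχ : Set.InjOn χ A)
    (hA : #A = Fintype.card α) (a : α) :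
    ∑ i ∈ A, χ i a = if a = 0 then (Fintype.card α : ℂ) else 0 := by
  classical
  have himage : A.image χ = univ := by
    refine eq_univ_of_card _ ?_
    rw [card_image_of_injOn hχ, hA, AddChar.card_eq]
  rw [← AddChar.sum_apply_eq_ite, ← himage, sum_image fun _ hx _ hy hxy => hχ hx hy hxy]

lemma dotZ_sub {d : ℕ} (h h' w : Fin d → ℤ) : dotZ (h - h') w = dotZ h w - dotZ h' w := by
  simp [dotZ, sub_mul, sum_sub_distrib]

lemma eFun_neg {d : ℕ} (h : Fin d → ℤ) (x : Fin d → ℝ) : eFun h (-x) = (eFun h x)⁻¹ := by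
  simp [eFun, ← Complex.exp_neg, sum_neg_distrib]

namespace RankLattice

variable {d r : ℕ} (z : Fin r → Fin d → ℤ) (n : Fin r → ℕ)

def toZMod (k : (j : Fin r) → Fin (n j)) : ∀ j, ZMod (n j) := fun j => ((k j : ℕ) : ZMod (n j))

lemma toZMod_injective : Function.Injective (toZMod n) := fun k k' hkk => by
  funext j
  have hval := congrArg ZMod.val (congrFun hkk j)
  simp only [toZMod, ZMod.val_natCast_of_lt (k j).isLt, ZMod.val_natCast_of_lt (k' j).isLt] at hval
  exact Fin.ext hval

variable [∀ j, NeZero (n j)]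

def dualChar (h : Fin d → ℤ) : AddChar (∀ j, ZMod (n j)) ℂ where
  toFun g := ∏ j, ZMod.stdAddChar ((dotZ h (z j) : ZMod (n j)) * g j)
  map_zero_eq_one' := by simp
  map_add_eq_mul' a b := by
    simp only [Pi.add_apply, mul_add, AddChar.map_add_eq_mul, prod_mul_distrib]

lemma dualChar_apply (h : Fin d → ℤ) (g : ∀ j, ZMod (n j)) :
    dualChar z n h g = ∏ j, ZMod.stdAddChar ((dotZ h (z j) : ZMod (n j)) * g j) := rfl

lemma dualChar_apply_single (h : Fin d → ℤ) (j : Fin r) :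
    dualChar z n h (Pi.single j 1) = ZMod.stdAddChar (dotZ h (z j) : ZMod (n j)) := by
  rw [dualChar_apply, prod_eq_single j (fun i _ hi => by simp [Pi.single_eq_of_ne hi]) (by simp)]
  simp

lemma inDual_sub_of_dualChar_eq {h h' : Fin d → ℤ} (heq : dualChar z n h = dualChar z n h') :
    InDual z n (h - h') := by
  intro j
  have hcoe : (dotZ h (z j) : ZMod (n j)) = dotZ h' (z j) :=
    ZMod.injective_stdAddChar <| by
      rw [← dualChar_apply_single, ← dualChar_apply_single, heq]
  rw [← ZMod.intCast_zmod_eq_zero_iff_dvd, dotZ_sub, Int.cast_sub, hcoe, sub_self]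

lemma dualChar_injOn {A : Finset (Fin d → ℤ)}
    (hA : ∀ h ∈ A, ∀ h' ∈ A, h ≠ h' → ¬ InDual z n (h - h')) :
    Set.InjOn (dualChar z n) A := fun h hh h' hh' heq =>
  by_contra fun hne => hA h hh h' hh' hne (inDual_sub_of_dualChar_eq z n heq)

lemma eFun_latPt (h : Fin d → ℤ) (k : (j : Fin r) → Fin (n j)) :
    eFun h (latPt z n k) = dualChar z n h (toZMod n k) := by
  have hterm : ∀ j, ZMod.stdAddChar ((dotZ h (z j) : ZMod (n j)) * toZMod n k j)
      = Complex.exp (2 * Real.pi * Complex.I * ∑ i, (h i : ℂ) * ((k j : ℂ) / n j * z j i)) := by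
    intro j
    rw [toZMod, ← Int.cast_natCast, ← Int.cast_mul, ZMod.stdAddChar_coe, dotZ]
    push_cast
    simp only [sum_mul, mul_sum, sum_div]
    exact congrArg _ (sum_congr rfl fun i _ => by ring)
  rw [dualChar_apply, prod_congr rfl fun j _ => hterm j, ← Complex.exp_sum, ← mul_sum, sum_comm]
  simp only [eFun, latPt]
  push_cast
  simp_rw [mul_sum]

lemma eFun_neg_latPt_mul_eFun_latPt (h : Fin d → ℤ) (k k' : (j : Fin r) → Fin (n j)) :
    eFun h (-(latPt z n k')) * eFun h (latPt z n k) =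
      dualChar z n h (toZMod n k - toZMod n k') := by
  rw [eFun_neg, eFun_latPt, eFun_latPt, AddChar.map_sub_eq_div, inv_mul_eq_div]

end RankLattice

open RankLattice in
theorem interpolation_condition
    (d r : ℕ)
    (z : Fin r → Fin d → ℤ) (n : Fin r → ℕ)
    (A : Finset (Fin d → ℤ))
    (hA : ∀ h ∈ A, ∀ h' ∈ A, h ≠ h' → ¬ InDual z n (h - h'))
    (hcard : A.card = ∏ j, n j)
    (u : (Fin d → ℝ) → ℂ)
    (k : (j : Fin r) → Fin (n j)) :
    ∑ h ∈ A,
        ((1 / (∏ j, (n j : ℂ))) *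
            ∑ k' : (j : Fin r) → Fin (n j), u (latPt z n k') * eFun h (-(latPt z n k'))) *
          eFun h (latPt z n k)
    = u (latPt z n k) := by
  have : ∀ j, NeZero (n j) := fun j => NeZero.of_pos (k j).pos
  have hcardG : Fintype.card (∀ j, ZMod (n j)) = ∏ j, n j := by simp [Fintype.card_pi]
  have hN : (∏ j, (n j : ℂ)) ≠ 0 :=
    prod_ne_zero_iff.mpr fun j _ => Nat.cast_ne_zero.mpr (NeZero.ne _)
  have horth :=
    AddChar.sum_apply_eq_ite_of_injOn (dualChar_injOn z n hA) (hcard.trans hcardG.symm)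
  calc _ = 1 / (∏ j, (n j : ℂ)) * ∑ k', u (latPt z n k') *
          ∑ h ∈ A, dualChar z n h (toZMod n k - toZMod n k') := by
        simp_rw [mul_assoc, sum_mul, mul_assoc, eFun_neg_latPt_mul_eFun_latPt, ← mul_sum]
        rw [sum_comm]
        simp_rw [← mul_sum]
    _ = u (latPt z n k) := by
        simp_rw [horth, sub_eq_zero, (toZMod_injective n).eq_iff, hcardG, mul_ite, mul_zero,
          sum_ite_eq, mem_univ, if_true]
        push_cast
        field_simp

end
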